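/- arXiv:1111.7005 — 5 statements merged into one kernel-verified Lean document; each statement's English description precedes it below -/
import Mathlib

section
/- Let T be a vector space, S = ⊕_{d≥0} Sᵈ T its symmetric algebra, and I ⊆ S a homogeneous ideal. Work in the power series ring S[[t]], and for k ≥ 0 let J_k be the ideal of S[[t]] generated by I and t^k. Let v(t) = v₀ + t v₁ + t² v₂ + ⋯ ∈ S[[t]] be a curve with each v_i ∈ S¹T = T. If m > 0, v(t)² ∈ J_m, and v₀² ∈ I, then for every s ≥ 2 one has v(t)^s ∈ J_{m+s-2}. -/
/-!
Write `Lₖ` for the ideal of series whose coefficients of index `< k` lie in `I`; then `J k = Lₖ`.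
Along `s ≥ 2` we carry the invariant `v^s ∈ L_{m+s-2}` and `v₀ · [t^{m+s-2}] v^s ∈ I`;
multiplying by `v` preserves it because `v₀² ∈ I`. For `s = 2` the second half comes from
differentiating `v³`: `(v³)' = 3 v² v' ∈ L_m` gives `m · [t^m] v³ ∈ I`, while
`[t^m] v³ ≡ v₀ · [t^m] v² (mod I)`; dividing by `m` is where characteristic zero enters.
-/

open Finset

namespace PowerSeries

variable {R : Type*} [CommRing R] (I : Ideal R)

def lowCoeffIdeal (k : ℕ) : Ideal R⟦X⟧ where
  carrier := {P | ∀ i < k, coeff i P ∈ I}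
  add_mem' ha hb i hi := by rw [map_add]; exact I.add_mem (ha i hi) (hb i hi)
  zero_mem' i _ := by rw [map_zero]; exact I.zero_mem
  smul_mem' c P hP i hi := by
    rw [smul_eq_mul, coeff_mul]
    refine I.sum_mem fun p hp => I.mul_mem_left _ (hP p.2 ?_)
    have := mem_antidiagonal.mp hp
    omega

variable {I}

variable (I) in
theorem span_C_image_union_X_pow_eq_lowCoeffIdeal (k : ℕ) :
    Ideal.span (C '' (I : Set R) ∪ {X ^ k}) = lowCoeffIdeal I k := by
  apply le_antisymm
  · rw [Ideal.span_le]
    rintro _ (⟨a, ha, rfl⟩ | rfl) i hi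
    · rw [coeff_C]; split_ifs; exacts [ha, I.zero_mem]
    · rw [coeff_X_pow, if_neg (by omega)]; exact I.zero_mem
  · intro P hP
    set T : R⟦X⟧ := ∑ i ∈ range k, C (coeff i P) * X ^ i
    have hT : T ∈ Ideal.span (C '' (I : Set R) ∪ {X ^ k}) :=
      Ideal.sum_mem _ fun i hi => Ideal.mul_mem_right _ _
        (Ideal.subset_span (Or.inl ⟨_, hP i (mem_range.mp hi), rfl⟩))
    obtain ⟨Q, hQ⟩ : X ^ k ∣ P - T := by
      refine X_pow_dvd_iff.mpr fun i hi => ?_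
      simp [T, map_sum, hi]
    rw [← sub_add_cancel P T, hQ]
    exact Ideal.add_mem _ (Ideal.mul_mem_right _ _ (Ideal.subset_span (Or.inr rfl))) hT

theorem natCast_mul_coeff_mem_of_derivative_mem {k : ℕ} {f : R⟦X⟧}
    (hf : d⁄dX R f ∈ lowCoeffIdeal I k) : (k : R) * coeff k f ∈ I := by
  cases k with
  | zero => simp
  | succ n =>
    have := hf n n.lt_succ_self
    rw [coeff_derivative, mul_comm] at this
    exact_mod_cast this

theorem coeff_mul_sub_coeff_zero_mul_mem {k : ℕ} (P : R⟦X⟧) {Q : R⟦X⟧}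
    (hQ : Q ∈ lowCoeffIdeal I k) : coeff k (P * Q) - coeff 0 P * coeff k Q ∈ I := by
  cases k with
  | zero => simp [coeff_zero_eq_constantCoeff]
  | succ n =>
    rw [coeff_mul, Nat.sum_antidiagonal_succ, add_sub_cancel_left]
    refine I.sum_mem fun p hp => I.mul_mem_left _ (hQ p.2 ?_)
    have := mem_antidiagonal.mp hp
    omega

theorem mul_mem_lowCoeffIdeal_succ {k : ℕ} (P : R⟦X⟧) {Q : R⟦X⟧}
    (hQ : Q ∈ lowCoeffIdeal I k) (hPQ : coeff 0 P * coeff k Q ∈ I) :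
    P * Q ∈ lowCoeffIdeal I (k + 1) := by
  intro i hi
  rcases Nat.lt_succ_iff_lt_or_eq.mp hi with hi | rfl
  · exact (lowCoeffIdeal I k).mul_mem_left P hQ i hi
  · simpa using I.add_mem (coeff_mul_sub_coeff_zero_mul_mem P hQ) hPQ

theorem coeff_zero_mul_coeff_succ_mul_mem {k : ℕ} {v Q : R⟦X⟧} (hv₀ : coeff 0 v ^ 2 ∈ I)
    (hQ : Q ∈ lowCoeffIdeal I k) (hvQ : coeff 0 v * coeff k Q ∈ I) :
    coeff 0 v * coeff (k + 1) (v * Q) ∈ I := by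
  rw [coeff_mul, Nat.sum_antidiagonal_succ, mul_add, mul_sum, ← mul_assoc, ← sq]
  refine I.add_mem (I.mul_mem_right _ hv₀) (I.sum_mem fun p hp => ?_)
  have hp := mem_antidiagonal.mp hp
  rcases Nat.eq_zero_or_pos p.1 with h0 | h0
  · obtain rfl : p.2 = k := by omega
    rw [h0, mul_left_comm]
    exact I.mul_mem_left _ hvQ
  · exact I.mul_mem_left _ (I.mul_mem_left _ (hQ p.2 (by omega)))

theorem natCast_mul_coeff_zero_mul_coeff_sq_mem {m : ℕ} {v : R⟦X⟧}
    (hv : v ^ 2 ∈ lowCoeffIdeal I m) : (m : R) * (coeff 0 v * coeff m (v ^ 2)) ∈ I := by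
  have hcube : (m : R) * coeff m (v * v ^ 2) ∈ I := by
    refine natCast_mul_coeff_mem_of_derivative_mem ?_
    rw [← pow_succ', Derivation.leibniz_pow, Nat.add_sub_cancel, smul_eq_mul]
    exact nsmul_mem (Ideal.mul_mem_right _ _ hv) _
  have := I.sub_mem hcube (I.mul_mem_left (m : R) (coeff_mul_sub_coeff_zero_mul_mem v hv))
  rwa [← mul_sub, sub_sub_cancel] at this

theorem pow_add_two_mem_lowCoeffIdeal {m : ℕ} {v : R⟦X⟧} (hm : IsUnit (m : R))
    (hv : v ^ 2 ∈ lowCoeffIdeal I m) (hv₀ : coeff 0 v ^ 2 ∈ I) :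
    ∀ r, v ^ (r + 2) ∈ lowCoeffIdeal I (m + r) := by
  suffices ∀ r, v ^ (r + 2) ∈ lowCoeffIdeal I (m + r) ∧
      coeff 0 v * coeff (m + r) (v ^ (r + 2)) ∈ I from fun r => (this r).1
  intro r
  induction r with
  | zero => exact ⟨hv, (Ideal.unit_mul_mem_iff_mem I hm).mp
      (natCast_mul_coeff_zero_mul_coeff_sq_mem hv)⟩
  | succ r ih =>
    rw [pow_succ']
    exact ⟨mul_mem_lowCoeffIdeal_succ v ih.1 ih.2,
      coeff_zero_mul_coeff_succ_mul_mem hv₀ ih.1 ih.2⟩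

end PowerSeries

theorem pow_mem_of_sq_mem_general {σ : Type*}
    (I : Ideal (MvPolynomial σ ℂ))
    (v : PowerSeries (MvPolynomial σ ℂ))
    (J : ℕ → Ideal (PowerSeries (MvPolynomial σ ℂ)))
    (hJ : ∀ k : ℕ, J k = Ideal.span
        ((PowerSeries.C (R := MvPolynomial σ ℂ)) '' (I : Set (MvPolynomial σ ℂ))
          ∪ {(PowerSeries.X : PowerSeries (MvPolynomial σ ℂ)) ^ k}))
    (m : ℕ) (hm : 0 < m)
    (hv2 : v ^ 2 ∈ J m)
    (hv0 : (PowerSeries.coeff (R := MvPolynomial σ ℂ) 0 v) ^ 2 ∈ I) :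
    ∀ s : ℕ, 2 ≤ s → v ^ s ∈ J (m + s - 2) := by
  simp only [hJ, PowerSeries.span_C_image_union_X_pow_eq_lowCoeffIdeal] at hv2 ⊢
  have hm' : IsUnit (m : MvPolynomial σ ℂ) := by
    simpa using (Nat.cast_ne_zero.mpr hm.ne' : (m : ℂ) ≠ 0).isUnit.map MvPolynomial.C
  intro s hs
  obtain ⟨r, rfl⟩ := Nat.exists_eq_add_of_le' hs
  simpa only [← add_assoc, Nat.add_sub_cancel] using
    PowerSeries.pow_add_two_mem_lowCoeffIdeal hm' hv2 hv0 r

/-- Let `S` be the symmetric algebra of a vector space `T` (modelled as a polynomial ring on a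
basis `σ` of `T`), `I ⊆ S` a homogeneous ideal, and for `k ≥ 0` let `J k` be the ideal of the
power series ring `S[[t]]` generated by `I` and `t^k`. If `v(t) = v₀ + t v₁ + ⋯` is a curve with
each coefficient `vᵢ ∈ T` (homogeneous of degree 1), `m > 0`, `v(t)² ∈ J m` and `v₀² ∈ I`, then
`v(t)^s ∈ J (m + s - 2)` for every `s ≥ 2`. -/
theorem pow_mem_of_sq_mem {σ : Type*}
    (I : Ideal (MvPolynomial σ ℂ))
    (hI : ∀ f ∈ I, ∀ d : ℕ, MvPolynomial.homogeneousComponent d f ∈ I)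
    (v : PowerSeries (MvPolynomial σ ℂ))
    (hv : ∀ i : ℕ, (PowerSeries.coeff (R := MvPolynomial σ ℂ) i v).IsHomogeneous 1)
    (J : ℕ → Ideal (PowerSeries (MvPolynomial σ ℂ)))
    (hJ : ∀ k : ℕ, J k = Ideal.span
        ((PowerSeries.C (R := MvPolynomial σ ℂ)) '' (I : Set (MvPolynomial σ ℂ))
          ∪ {(PowerSeries.X : PowerSeries (MvPolynomial σ ℂ)) ^ k}))
    (m : ℕ) (hm : 0 < m)
    (hv2 : v ^ 2 ∈ J m)
    (hv0 : (PowerSeries.coeff (R := MvPolynomial σ ℂ) 0 v) ^ 2 ∈ I) :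
    ∀ s : ℕ, 2 ≤ s → v ^ s ∈ J (m + s - 2) :=
  pow_mem_of_sq_mem_general I v J hJ m hm hv2 hv0
end

section
/- There do not exist complex numbers β, γ, f₁, f₂, f₃, g₁, g₂, g₃ such that the 3×3 matrix [[γ + f₁g₁, β + f₁g₂, 1 + f₁g₃],[β + f₂g₁, 1 + f₂g₂, f₂g₃],[1 + f₃g₁, f₃g₂, f₃g₃]] has rank at most 1. -/
/-!
Subtracting a rank-one matrix lowers the rank by at most one. The Hankel part
`[[γ,β,1],[β,1,0],[1,0,0]]` has determinant `-1`, hence rank 3, so any rank-one perturbation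
of it has rank at least 2.
-/

namespace Matrix

variable {m n K : Type*} [Fintype n] [Field K]

theorem rank_add_le (A B : Matrix m n K) : (A + B).rank ≤ A.rank + B.rank := by
  rw [rank, rank, rank, mulVecLin_add]
  exact (Submodule.finrank_mono (LinearMap.range_add_le _ _)).trans
    (Submodule.finrank_add_le_finrank_add_finrank _ _)

theorem rank_le_rank_add_vecMulVec_add_one (A : Matrix m n K) (u : m → K) (v : n → K) :
    A.rank ≤ (A + vecMulVec u v).rank + 1 := by
  have hA : A = (A + vecMulVec u v) + vecMulVec (-u) v := by
    rw [neg_vecMulVec, add_neg_cancel_right]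
  calc A.rank = ((A + vecMulVec u v) + vecMulVec (-u) v).rank := congrArg rank hA
    _ ≤ (A + vecMulVec u v).rank + 1 :=
      (rank_add_le _ _).trans (by gcongr; exact rank_vecMulVec_le _ _)

end Matrix

open Matrix

/-- There are no complex numbers `β, γ, f₁, f₂, f₃, g₁, g₂, g₃` such that
`[[γ,β,1],[β,1,0],[1,0,0]] + (fᵢgⱼ)` has rank at most 1. -/
theorem no_rank_one_perturbation :
    ¬ ∃ β γ f₁ f₂ f₃ g₁ g₂ g₃ : ℂ,
      (!![γ + f₁ * g₁, β + f₁ * g₂, 1 + f₁ * g₃;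
          β + f₂ * g₁, 1 + f₂ * g₂, f₂ * g₃;
          1 + f₃ * g₁, f₃ * g₂, f₃ * g₃] : Matrix (Fin 3) (Fin 3) ℂ).rank ≤ 1 := by
  rintro ⟨β, γ, f₁, f₂, f₃, g₁, g₂, g₃, h⟩
  set H : Matrix (Fin 3) (Fin 3) ℂ := !![γ, β, 1; β, 1, 0; 1, 0, 0]
  have hsum : !![γ + f₁ * g₁, β + f₁ * g₂, 1 + f₁ * g₃;
      β + f₂ * g₁, 1 + f₂ * g₂, f₂ * g₃;
      1 + f₃ * g₁, f₃ * g₂, f₃ * g₃] = H + vecMulVec ![f₁, f₂, f₃] ![g₁, g₂, g₃] := by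
    ext i j; fin_cases i <;> fin_cases j <;> simp [H, vecMulVec]
  have hH : H.rank = 3 := rank_of_det_ne_zero (by simp [H, det_fin_three])
  have hperturb := H.rank_le_rank_add_vecMulVec_add_one ![f₁, f₂, f₃] ![g₁, g₂, g₃]
  rw [← hsum] at hperturb
  omega
end

section
/- Let U ⊆ Mat₃(ℂ) be the 3-dimensional space {[[t,s,u],[s,0,0],[u,0,0]] : s,t,u ∈ ℂ}. Then the rank of U (the smallest r such that U lies in the span of r rank-one matrices) equals 5. -/
/-!
Five rank-one matrices suffice: the bordered matrix is a combination of `eᵢ eᵢᵀ`,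
`(e₀ + e₁)(e₀ + e₁)ᵀ` and `(e₀ + e₂)(e₀ + e₂)ᵀ`.

For the lower bound, pad to four rank-one matrices `aᵢ bᵢᵀ` whose span contains the space, and let
`cᵢ` collect the coefficients of the three basis matrices, so the space is spanned by the slices of
the tensor `∑ aᵢ ⊗ bᵢ ⊗ cᵢ`. Slicing along the first factor instead, `Φ e = (aᵢ ⬝ᵥ e)ᵢ` satisfies
`∑ (Φ e)ᵢ bᵢ cᵢᵀ = x I + y E₀₁ + z E₀₂` for `e = (x, y, z)`. The range of `Φ` is a hyperplane
`ker f` of `K⁴`. A vector of `ker f` with at most two nonzero coordinates is sent to a sum of two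
rank-one matrices, which is singular; as `det (x I + y E₀₁ + z E₀₂) = x³`, its `(0, 0)` entry
vanishes. These vectors span `ker f`, so the `(0, 0)` entry vanishes on all of `ker f`, although
`Φ e₀ ∈ ker f` is sent to the identity.
-/

open Matrix Module Submodule

theorem Submodule.exists_ker_eq_of_finrank_add_one {K V : Type*} [Field K] [AddCommGroup V]
    [Module K V] [FiniteDimensional K V] (W : Submodule K V) (h : finrank K W + 1 = finrank K V) :
    ∃ f : V →ₗ[K] K, LinearMap.ker f = W := by
  have hW : W < ⊤ := lt_top_iff_ne_top.2 fun hW => by rw [hW, finrank_top] at h; omega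
  obtain ⟨f, hf0, hWf⟩ := W.exists_le_ker_of_lt_top hW
  have := Module.Dual.finrank_ker_add_one_of_ne_zero hf0
  exact ⟨f, (eq_of_le_of_finrank_le hWf (by omega)).symm⟩

theorem LinearMap.apply_eq_zero_of_mem_ker_of_forall_single_add_single {ι K W : Type*}
    [Fintype ι] [DecidableEq ι] [Field K] [AddCommGroup W] [Module K W] (f : (ι → K) →ₗ[K] K)
    (ℓ : (ι → K) →ₗ[K] W)
    (hℓ : ∀ i j (x y : K), Pi.single i x + Pi.single j y ∈ ker f →
      ℓ (Pi.single i x + Pi.single j y) = 0)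
    {d : ι → K} (hd : d ∈ ker f) : ℓ d = 0 := by
  by_cases hf : ∀ m, f (Pi.single m 1) = 0
  · have : ℓ = 0 := (Pi.basisFun K ι).ext fun i => by simpa using hℓ i i 1 0 (by simpa using hf i)
    simp [this]
  obtain ⟨m, hm⟩ := not_forall.mp hf
  -- `g` maps into `ker f`, and sends a basis vector to a vector supported on two coordinates
  let g : (ι → K) →ₗ[K] (ι → K) := f (Pi.single m 1) • LinearMap.id - f.smulRight (Pi.single m 1)
  have hg : ℓ ∘ₗ g = 0 := (Pi.basisFun K ι).ext fun i => by
    have hgi : g (Pi.single i 1) =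
        Pi.single i (f (Pi.single m 1)) + Pi.single m (-f (Pi.single i 1)) := by
      simp [g, ← Pi.single_smul, sub_eq_add_neg, Pi.single_neg]
    simp only [Pi.basisFun_apply, LinearMap.comp_apply, hgi, LinearMap.zero_apply]
    apply hℓ
    rw [← hgi, mem_ker]
    simp [g, mul_comm]
  simpa [g, mem_ker.mp hd, hm] using LinearMap.congr_fun hg d

namespace Matrix

theorem exists_eq_vecMulVec_of_rank_le_one {m n K : Type*} [Fintype n] [Field K]
    {A : Matrix m n K} (h : A.rank ≤ 1) : ∃ u v, A = vecMulVec u v := by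
  classical
  obtain ⟨u, hu⟩ := finrank_le_one_iff.mp h
  choose v hv using fun j => hu ⟨A *ᵥ Pi.single j 1, LinearMap.mem_range_self _ _⟩
  refine ⟨u, v, ext fun k j => ?_⟩
  have := congr_arg (fun w : LinearMap.range A.mulVecLin => (w : m → K) k) (hv j)
  simpa [vecMulVec_apply, mul_comm] using this.symm

theorem rank_vecMulVec_eq_one {m n K : Type*} [Fintype n] [Field K] {u : m → K} {v : n → K}
    (hu : u ≠ 0) (hv : v ≠ 0) : (vecMulVec u v).rank = 1 := by
  classical
  refine le_antisymm (rank_vecMulVec_le u v) (Nat.one_le_iff_ne_zero.mpr fun h0 => ?_)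
  obtain ⟨k, hk⟩ := Function.ne_iff.mp hu
  obtain ⟨j, hj⟩ := Function.ne_iff.mp hv
  have hA : (vecMulVec u v).mulVecLin = 0 :=
    LinearMap.range_eq_bot.mp (finrank_eq_zero.mp h0)
  have := congr_fun (LinearMap.congr_fun hA (Pi.single j 1)) k
  simp only [mulVecLin_apply, mulVec_single_one, col_apply, vecMulVec_apply, LinearMap.zero_apply,
    Pi.zero_apply] at this
  exact mul_ne_zero hk hj this

theorem det_vecMulVec_add_vecMulVec {R : Type*} [CommRing R] (a b c d : Fin 3 → R) :
    (vecMulVec a b + vecMulVec c d).det = 0 := by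
  simp only [det_fin_three, add_apply, vecMulVec_apply]
  ring

theorem sum_mulVec_smul_vecMulVec {ι m n R : Type*} [CommSemiring R] [Fintype ι] [Fintype m]
    (a b : ι → m → R) (c : n → ι → R) (e : m → R) :
    ∑ i, (of a *ᵥ e) i • vecMulVec (b i) (fun l => c l i) =
      of fun k l => ∑ j, e j * (∑ i, c l i • vecMulVec (a i) (b i)) j k := by
  ext k l
  simp only [sum_apply, smul_apply, vecMulVec_apply, mulVec, dotProduct, of_apply, smul_eq_mul,
    Finset.mul_sum, Finset.sum_mul]
  rw [Finset.sum_comm]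
  exact Finset.sum_congr rfl fun i _ => Finset.sum_congr rfl fun j _ => by ring

end Matrix

theorem not_exists_linearCombination_comp_eq_unipotent {ι K : Type*} [Fintype ι] [Field K]
    (hι : Fintype.card ι = 4) {R : ι → Matrix (Fin 3) (Fin 3) K} (hR : ∀ i, (R i).rank ≤ 1) :
    ¬ ∃ Φ : (Fin 3 → K) →ₗ[K] (ι → K), ∀ e,
      Fintype.linearCombination K R (Φ e) = !![e 0, e 1, e 2; 0, e 0, 0; 0, 0, e 0] := by
  classical
  rintro ⟨Φ, hΦ⟩
  have hΦinj : Function.Injective Φ := fun e e' h => by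
    have h' := congr_arg (Fintype.linearCombination K R) h
    rw [hΦ, hΦ] at h'
    funext j
    fin_cases j
    exacts [congr_fun₂ h' 0 0, congr_fun₂ h' 0 1, congr_fun₂ h' 0 2]
  obtain ⟨f, hf⟩ := (LinearMap.range Φ).exists_ker_eq_of_finrank_add_one
    (by rw [LinearMap.finrank_range_of_inj hΦinj]; simp [hι])
  let ℓ := entryLinearMap K K (0 : Fin 3) (0 : Fin 3) ∘ₗ Fintype.linearCombination K R
  have hℓ {d} (hd : d ∈ LinearMap.ker f) : ℓ d = 0 := by
    refine f.apply_eq_zero_of_mem_ker_of_forall_single_add_single ℓ (fun i j x y hxy => ?_) hd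
    obtain ⟨e, he⟩ : Pi.single i x + Pi.single j y ∈ LinearMap.range Φ := hf ▸ hxy
    obtain ⟨a, b, hab⟩ := exists_eq_vecMulVec_of_rank_le_one (hR i)
    obtain ⟨c, d, hcd⟩ := exists_eq_vecMulVec_of_rank_le_one (hR j)
    -- `x • R i + y • R j` is singular, while `det (x I + y E₀₁ + z E₀₂) = x ^ 3`
    have hdet : e 0 ^ 3 = 0 := by
      have := det_vecMulVec_add_vecMulVec (x • a) b (y • c) d
      rw [smul_vecMulVec, smul_vecMulVec, ← hab, ← hcd, ← Fintype.linearCombination_apply_single,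
        ← Fintype.linearCombination_apply_single, ← map_add, ← he, hΦ] at this
      simpa [det_fin_three] using this
    rw [← he]
    simpa [ℓ, hΦ] using pow_eq_zero_iff (n := 3) (by norm_num) |>.mp hdet
  have h1 : ℓ (Φ (Pi.single 0 1)) = 1 := by simp [ℓ, hΦ]
  exact one_ne_zero (h1.symm.trans (hℓ (hf ▸ LinearMap.mem_range_self Φ _)))

theorem not_forall_bordered_mem_span_of_card_eq_four {ι K : Type*} [Fintype ι] [Field K]
    (hι : Fintype.card ι = 4) {M : ι → Matrix (Fin 3) (Fin 3) K} (hM : ∀ i, (M i).rank ≤ 1) :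
    ¬ ∀ s t u : K, !![t, s, u; s, 0, 0; u, 0, 0] ∈ span K (Set.range M) := by
  intro hU
  choose a b hab using fun i => exists_eq_vecMulVec_of_rank_le_one (hM i)
  choose c hc using fun l : Fin 3 => (mem_span_range_iff_exists_fun K).mp
    (hU (![0, 1, 0] l) (![1, 0, 0] l) (![0, 0, 1] l))
  -- re-slice the tensor `∑ i, a i ⊗ b i ⊗ c i` along its first factor
  refine not_exists_linearCombination_comp_eq_unipotent hι
    (R := fun i => vecMulVec (b i) fun l => c l i) (fun i => rank_vecMulVec_le _ _)
    ⟨(of a).mulVecLin, fun e => ?_⟩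
  rw [Fintype.linearCombination_apply, mulVecLin_apply, sum_mulVec_smul_vecMulVec]
  simp only [← hab, hc]
  ext k l
  fin_cases k <;> fin_cases l <;> simp [Fin.sum_univ_three]

theorem bordered_mem_span_vecMulVec_self {K : Type*} [CommRing K] (s t u : K) :
    !![t, s, u; s, 0, 0; u, 0, 0] ∈ span K (Set.range fun i => vecMulVec
      (![![1, 1, 0], ![1, 0, 1], ![1, 0, 0], ![0, 1, 0], ![0, 0, 1]] i)
      (![![1, 1, 0], ![1, 0, 1], ![1, 0, 0], ![0, 1, 0], ![0, 0, 1]] i)) := by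
  refine (mem_span_range_iff_exists_fun K).mpr ⟨![s, u, t - s - u, -s, -u], ?_⟩
  ext k l
  fin_cases k <;> fin_cases l <;> simp [Fin.sum_univ_five]

theorem exists_fin_extend_of_le {α : Type*} {P : α → Prop} {r s : ℕ} (h : r ≤ s) (f : Fin r → α)
    (hf : ∀ i, P (f i)) {a : α} (ha : P a) :
    ∃ g : Fin s → α, (∀ i, P (g i)) ∧ Set.range f ⊆ Set.range g := by
  refine ⟨fun i => if hi : (i : ℕ) < r then f ⟨i, hi⟩ else a, fun i => ?_, ?_⟩
  · dsimp only
    split_ifs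
    exacts [hf _, ha]
  · rintro _ ⟨i, rfl⟩
    exact ⟨Fin.castLE h i, by simp⟩

/-- The rank of the 3-dimensional space of matrices `{[[t,s,u],[s,0,0],[u,0,0]]}`, i.e. the
smallest `r` such that it is contained in the span of `r` rank-one matrices, equals 5. -/
theorem space_rank_bordered_eq_five :
    IsLeast {r : ℕ | ∃ M : Fin r → Matrix (Fin 3) (Fin 3) ℂ,
        (∀ i, (M i).rank = 1) ∧
        ∀ s t u : ℂ, (!![t, s, u; s, 0, 0; u, 0, 0] : Matrix (Fin 3) (Fin 3) ℂ)
          ∈ Submodule.span ℂ (Set.range M)} 5 := by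
  refine ⟨⟨_, fun i => ?_, bordered_mem_span_vecMulVec_self⟩, ?_⟩
  · fin_cases i <;> exact rank_vecMulVec_eq_one (by simp) (by simp)
  rintro r ⟨M, hM, hU⟩
  by_contra! hr
  obtain ⟨M', hM', hMM'⟩ := exists_fin_extend_of_le (P := fun A => A.rank ≤ 1) (s := 4)
    (by omega) M (fun i => (hM i).le) (a := 0) (by simp)
  exact not_forall_bordered_mem_span_of_card_eq_four (Fintype.card_fin 4) hM'
    fun s t u => span_mono hMM' (hU s t u)
end

section
/- The tensor T = a₁⊗b₂⊗c₂ + a₂⊗b₁⊗c₂ + a₂⊗b₂⊗c₁ + a₁⊗b₁⊗c₃ + a₁⊗b₃⊗c₁ + a₃⊗b₁⊗c₁ ∈ ℂ³⊗ℂ³⊗ℂ³ (with {a_i}, {b_i}, {c_i} bases) has tensor rank exactly 5. -/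
/-!
Contracting `T` with a functional `g` on `B` gives the slice matrix
`!![g b₂, g b₁, g b₀; g b₁, g b₀, 0; g b₀, 0, 0]`, of determinant `-(g b₀)³`. For a decomposition
`T = ∑ₛ xₛ ⊗ yₛ ⊗ zₛ` the same slice is `∑ₛ g(yₛ) xₛ zₛᵀ`, of rank at most the number of `s` with
`g yₛ ≠ 0`. A `g` killing every `yₛ` has zero slice, hence `g = 0`, so the `yₛ` span `B`. Three of
them form a basis, and some dual coordinate `g` of it has `g b₀ ≠ 0` and kills the other two; then at
most `r - 2` summands survive in a slice of rank `3`, so `r ≥ 5`. Five terms suffice by an explicit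
decomposition.
-/

open scoped TensorProduct

open Finset Module Matrix

section Slices

variable {K A B C ι κ σ : Type*} [CommRing K] [AddCommGroup A] [Module K A] [AddCommGroup B]
  [Module K B] [AddCommGroup C] [Module K C]

noncomputable def tripleContraction (f : Dual K A) (g : Dual K B) (h : Dual K C) :
    A ⊗[K] (B ⊗[K] C) →ₗ[K] K :=
  TensorProduct.lift (f.smulRight (TensorProduct.lift (g.smulRight h)))

@[simp]
lemma tripleContraction_tmul (f : Dual K A) (g : Dual K B) (h : Dual K C) (x : A) (y : B)
    (z : C) : tripleContraction f g h (x ⊗ₜ[K] (y ⊗ₜ[K] z)) = f x * (g y * h z) := by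
  simp [tripleContraction]

noncomputable def sliceMatrix (a : Basis ι K A) (g : Dual K B) (c : Basis κ K C)
    (t : A ⊗[K] (B ⊗[K] C)) : Matrix ι κ K :=
  Matrix.of fun i k => tripleContraction (a.coord i) g (c.coord k) t

lemma sliceMatrix_sum_tmul [Fintype σ] [DecidableEq σ] (a : Basis ι K A) (g : Dual K B)
    (c : Basis κ K C) (x : σ → A) (y : σ → B) (z : σ → C) :
    sliceMatrix a g c (∑ s, x s ⊗ₜ[K] (y s ⊗ₜ[K] z s)) =
      Matrix.of (fun i s => a.repr (x s) i) * diagonal (fun s => g (y s)) *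
        Matrix.of (fun s k => c.repr (z s) k) := by
  ext i k
  simp only [sliceMatrix, mul_apply (M := _ * _), mul_diagonal, map_sum, tripleContraction_tmul,
    Basis.coord_apply, of_apply]
  exact sum_congr rfl fun s _ => by ring

end Slices

lemma rank_mul_diagonal_mul_le {K m n σ : Type*} [Field K] [DecidableEq K] [Fintype n] [Fintype σ]
    [DecidableEq σ] (X : Matrix m σ K) (d : σ → K) (Z : Matrix σ n K) :
    (X * diagonal d * Z).rank ≤ #{s | d s ≠ 0} := by
  calc (X * diagonal d * Z).rank ≤ (diagonal d).rank :=
        (rank_mul_le_left _ _).trans (rank_mul_le_right _ _)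
    _ = #{s | d s ≠ 0} := by rw [rank_diagonal, Fintype.card_subtype]

lemma exists_dual_apply_ne_zero_card_le {K V ι : Type*} [Field K] [DecidableEq K]
    [AddCommGroup V] [Module K V] [Fintype ι] {y : ι → V}
    (hy : Submodule.span K (Set.range y) = ⊤) {v : V} (hv : v ≠ 0) :
    ∃ g : Dual K V, g v ≠ 0 ∧ #{s | g (y s) ≠ 0} + finrank K V ≤ Fintype.card ι + 1 := by
  classical
  obtain ⟨κ, e, he, hspan, hli⟩ := exists_linearIndependent' K y
  have : Fintype κ := Fintype.ofInjective e he
  let β := Basis.mk hli (by rw [hspan, hy])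
  obtain ⟨j, hj⟩ : ∃ j, β.coord j v ≠ 0 := by
    by_contra! h
    exact hv (β.repr.map_eq_zero_iff.mp (Finsupp.ext h))
  refine ⟨β.coord j, hj, ?_⟩
  have hsub : ({s | β.coord j (y s) ≠ 0} : Finset ι) ⊆ ((univ.erase j).map ⟨e, he⟩)ᶜ := by
    intro s hs
    simp only [mem_filter, mem_univ, true_and] at hs
    simp only [mem_compl, mem_map, mem_erase, mem_univ, and_true, Function.Embedding.coeFn_mk,
      not_exists, not_and]
    rintro k hkj rfl
    have hβk : y (e k) = β k := by simp [β]
    rw [hβk, Basis.coord_apply, Basis.repr_self, Finsupp.single_eq_of_ne hkj.symm] at hs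
    exact hs rfl
  have hκ : Fintype.card κ ≤ Fintype.card ι := Fintype.card_le_of_injective e he
  have hκ0 : 0 < Fintype.card κ := Fintype.card_pos_iff.mpr ⟨j⟩
  calc #{s | β.coord j (y s) ≠ 0} + finrank K V
      ≤ #((univ.erase j).map ⟨e, he⟩)ᶜ + Fintype.card κ := by
        rw [finrank_eq_card_basis β]; gcongr
    _ = Fintype.card ι + 1 := by
        rw [card_compl, card_map, card_erase_of_mem (mem_univ j), card_univ]; omega

section TypeIII

variable {K A B C : Type*} [AddCommGroup A] [AddCommGroup B] [AddCommGroup C]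

section CommRing

variable [CommRing K] [Module K A] [Module K B] [Module K C]
  (a : Basis (Fin 3) K A) (b : Basis (Fin 3) K B) (c : Basis (Fin 3) K C)

noncomputable def typeIIITensor : A ⊗[K] (B ⊗[K] C) :=
  a 0 ⊗ₜ[K] (b 1 ⊗ₜ[K] c 1) + a 1 ⊗ₜ[K] (b 0 ⊗ₜ[K] c 1) + a 1 ⊗ₜ[K] (b 1 ⊗ₜ[K] c 0)
    + a 0 ⊗ₜ[K] (b 0 ⊗ₜ[K] c 2) + a 0 ⊗ₜ[K] (b 2 ⊗ₜ[K] c 0) + a 2 ⊗ₜ[K] (b 0 ⊗ₜ[K] c 0)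

/-- `(a₀ + aᵢ) ⊗ (b₀ + bᵢ) ⊗ c_{2-i}` produces the two mixed terms in `c_{2-i}`; the summands
`aᵢ ⊗ bᵢ ⊗ _` cancel its diagonal terms and supply `a₀ ⊗ b₀ ⊗ c₂ + a₁ ⊗ b₁ ⊗ c₀`. -/
lemma typeIIITensor_eq_sum_five :
    typeIIITensor a b c = ∑ i, ![a 0, a 1, a 2, a 0 + a 1, a 0 + a 2] i ⊗ₜ[K]
      (![b 0, b 1, b 2, b 0 + b 1, b 0 + b 2] i ⊗ₜ[K]
        ![c 2 - c 1 - c 0, c 0 - c 1, -c 0, c 1, c 0] i) := by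
  simp only [typeIIITensor, Fin.sum_univ_five, cons_val_zero, cons_val_one, cons_val_two,
    cons_val_three, cons_val_four, head_cons, tail_cons, TensorProduct.tmul_add,
    TensorProduct.add_tmul, TensorProduct.tmul_sub, TensorProduct.tmul_neg]
  abel

lemma sliceMatrix_typeIIITensor (g : Dual K B) :
    sliceMatrix a g c (typeIIITensor a b c) =
      !![g (b 2), g (b 1), g (b 0); g (b 1), g (b 0), 0; g (b 0), 0, 0] := by
  ext i k
  fin_cases i <;> fin_cases k <;>
    simp [sliceMatrix, typeIIITensor, Basis.coord_apply, Finsupp.single_apply]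

end CommRing

variable [Field K] [Module K A] [Module K B] [Module K C]
  (a : Basis (Fin 3) K A) (b : Basis (Fin 3) K B) (c : Basis (Fin 3) K C)

lemma rank_sliceMatrix_typeIIITensor {g : Dual K B} (hg : g (b 0) ≠ 0) :
    (sliceMatrix a g c (typeIIITensor a b c)).rank = 3 := by
  have hdet : det !![g (b 2), g (b 1), g (b 0); g (b 1), g (b 0), 0; g (b 0), 0, 0] =
      -g (b 0) ^ 3 := by
    simp [det_fin_three]
    ring
  rw [sliceMatrix_typeIIITensor, rank_of_isUnit _ ((isUnit_iff_isUnit_det _).mpr ?_),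
    Fintype.card_fin]
  rw [hdet, isUnit_iff_ne_zero]
  exact neg_ne_zero.mpr (pow_ne_zero 3 hg)

variable {σ : Type*} [Fintype σ] [DecidableEq σ] {x : σ → A} {y : σ → B} {z : σ → C}

lemma span_range_eq_top_of_typeIIITensor_eq_sum
    (hT : typeIIITensor a b c = ∑ s, x s ⊗ₜ[K] (y s ⊗ₜ[K] z s)) :
    Submodule.span K (Set.range y) = ⊤ := by
  rw [← Submodule.dualAnnihilator_eq_bot_iff, Submodule.eq_bot_iff]
  intro f hf
  have hfy : ∀ s, f (y s) = 0 := fun s =>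
    (Submodule.mem_dualAnnihilator f).mp hf _ (Submodule.subset_span ⟨s, rfl⟩)
  have hslice := sliceMatrix_sum_tmul a f c x y z
  simp only [← hT, sliceMatrix_typeIIITensor, hfy, diagonal_zero, Matrix.mul_zero,
    Matrix.zero_mul] at hslice
  have h := fun i k => congrFun₂ hslice i k
  refine b.ext fun i => ?_
  fin_cases i
  · simpa using h 2 0
  · simpa using h 1 0
  · simpa using h 0 0

lemma five_le_card_of_typeIIITensor_eq_sum
    (hT : typeIIITensor a b c = ∑ s, x s ⊗ₜ[K] (y s ⊗ₜ[K] z s)) :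
    5 ≤ Fintype.card σ := by
  classical
  have hB : finrank K B = 3 := by rw [finrank_eq_card_basis b, Fintype.card_fin]
  obtain ⟨g, hg, hcard⟩ := exists_dual_apply_ne_zero_card_le
    (span_range_eq_top_of_typeIIITensor_eq_sum a b c hT) (b.ne_zero 0)
  have hrank := rank_mul_diagonal_mul_le (Matrix.of fun i s => a.repr (x s) i)
    (fun s => g (y s)) (Matrix.of fun s k => c.repr (z s) k)
  rw [← sliceMatrix_sum_tmul, ← hT, rank_sliceMatrix_typeIIITensor a b c hg] at hrank
  omega

end TypeIII

/-- The tensor `a₁⊗b₂⊗c₂ + a₂⊗b₁⊗c₂ + a₂⊗b₂⊗c₁ + a₁⊗b₁⊗c₃ + a₁⊗b₃⊗c₁ + a₃⊗b₁⊗c₁`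
(with `{aᵢ}, {bᵢ}, {cᵢ}` bases of 3-dimensional spaces) has tensor rank exactly 5. -/
theorem rank_type_iii_tensor_eq_five {A B C : Type*}
    [AddCommGroup A] [Module ℂ A] [AddCommGroup B] [Module ℂ B] [AddCommGroup C] [Module ℂ C]
    (a : Module.Basis (Fin 3) ℂ A) (b : Module.Basis (Fin 3) ℂ B) (c : Module.Basis (Fin 3) ℂ C) :
    IsLeast {r : ℕ | ∃ (x : Fin r → A) (y : Fin r → B) (z : Fin r → C),
        (a 0 ⊗ₜ[ℂ] (b 1 ⊗ₜ[ℂ] c 1) + a 1 ⊗ₜ[ℂ] (b 0 ⊗ₜ[ℂ] c 1) + a 1 ⊗ₜ[ℂ] (b 1 ⊗ₜ[ℂ] c 0)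
          + a 0 ⊗ₜ[ℂ] (b 0 ⊗ₜ[ℂ] c 2) + a 0 ⊗ₜ[ℂ] (b 2 ⊗ₜ[ℂ] c 0) + a 2 ⊗ₜ[ℂ] (b 0 ⊗ₜ[ℂ] c 0)
          : A ⊗[ℂ] (B ⊗[ℂ] C))
          = ∑ i, x i ⊗ₜ[ℂ] (y i ⊗ₜ[ℂ] z i)} 5 := by
  refine ⟨⟨_, _, _, typeIIITensor_eq_sum_five a b c⟩, ?_⟩
  rintro r ⟨x, y, z, hT⟩
  simpa using five_le_card_of_typeIIITensor_eq_sum a b c hT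
end

section
/- The tensor T = a₁⊗(b₁⊗c₂ + b₂⊗c₁) + a₂⊗b₁⊗c₁ + a₃⊗b₃⊗c₃ ∈ ℂ³⊗ℂ³⊗ℂ³ (with {a_i},{b_i},{c_i} bases) has tensor rank exactly 4. -/
/-!
If `T` were a sum of three decomposable tensors `xᵢ ⊗ yᵢ ⊗ zᵢ`, the `xᵢ` would form a basis
of `A`, since no nonzero functional on `A` kills `T`. Contracting `T` with the dual basis then
shows that the slices `αM₀ + βM₁ + γM₂ = [[β, α, 0], [α, 0, 0], [0, 0, γ]]` are spanned by
three rank-one matrices. But a slice has rank at most one only if `α = 0`, so the rank-one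
slices span only a plane. In coordinates the dual basis is replaced by the rows of the
adjugate of `(xᵢ)`.
-/

open scoped TensorProduct Matrix

section Decomposition

variable {R A B C : Type*} [CommSemiring R] [AddCommMonoid A] [Module R A]
  [AddCommMonoid B] [Module R B] [AddCommMonoid C] [Module R C]

def HasRankDecomposition (t : A ⊗[R] (B ⊗[R] C)) (r : ℕ) : Prop :=
  ∃ (x : Fin r → A) (y : Fin r → B) (z : Fin r → C), t = ∑ i, x i ⊗ₜ[R] (y i ⊗ₜ[R] z i)

variable {t : A ⊗[R] (B ⊗[R] C)} {r s : ℕ}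

theorem HasRankDecomposition.succ (h : HasRankDecomposition t r) :
    HasRankDecomposition t (r + 1) := by
  obtain ⟨x, y, z, rfl⟩ := h
  exact ⟨Fin.cons 0 x, Fin.cons 0 y, Fin.cons 0 z, by simp [Fin.sum_univ_succ]⟩

theorem HasRankDecomposition.mono (h : HasRankDecomposition t r) (hrs : r ≤ s) :
    HasRankDecomposition t s := by
  induction s, hrs using Nat.le_induction with
  | base => exact h
  | succ s _ ih => exact ih.succ

theorem Module.Basis.tensorProduct_repr_sum_tmul_tmul {ι κ μ n : Type*} [Fintype n]
    (a : Module.Basis ι R A) (b : Module.Basis κ R B) (c : Module.Basis μ R C)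
    (x : n → A) (y : n → B) (z : n → C) (p : ι) (q : κ) (s : μ) :
    (a.tensorProduct (b.tensorProduct c)).repr (∑ i, x i ⊗ₜ[R] (y i ⊗ₜ[R] z i)) (p, q, s) =
      ∑ i, a.repr (x i) p * (b.repr (y i) q * c.repr (z i) s) := by
  simp only [map_sum, Finsupp.coe_finsetSum, Finset.sum_apply,
    Module.Basis.tensorProduct_repr_tmul_apply, smul_eq_mul]
  exact Finset.sum_congr rfl fun i _ => by ring

end Decomposition

section Coordinates

variable {R n κ μ : Type*} [Fintype n] {Y : Matrix κ n R} {Z : Matrix μ n R}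

theorem sum_mul_eq_sum_vecMul_mul [CommSemiring R] {ι : Type*} [Fintype ι] {X : Matrix ι n R}
    {T : ι → κ → μ → R}
    (hT : ∀ p q s, ∑ i, X p i * (Y q i * Z s i) = T p q s) (v : ι → R) (q : κ) (s : μ) :
    ∑ p, v p * T p q s = ∑ i, (v ᵥ* X) i * (Y q i * Z s i) := by
  simp only [← hT, Finset.mul_sum, Matrix.vecMul_apply_eq_sum, Finset.sum_mul, mul_assoc]
  exact Finset.sum_comm

theorem sum_adjugate_mul_eq_det_mul [CommRing R] [DecidableEq n] {X : Matrix n n R}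
    {T : n → κ → μ → R} (hT : ∀ p q s, ∑ i, X p i * (Y q i * Z s i) = T p q s)
    (i : n) (q : κ) (s : μ) :
    ∑ p, X.adjugate i p * T p q s = X.det * (Y q i * Z s i) := by
  rw [sum_mul_eq_sum_vecMul_mul hT, ← Matrix.mul_apply_eq_vecMul, Matrix.adjugate_mul]
  simp [Matrix.one_apply]

end Coordinates

section TypeII

variable {R : Type*} [CommSemiring R]

/-- `typeII p q s` is the coefficient of `aₚ ⊗ b_q ⊗ cₛ` in
`a₀ ⊗ (b₀ ⊗ c₁ + b₁ ⊗ c₀) + a₁ ⊗ b₀ ⊗ c₀ + a₂ ⊗ b₂ ⊗ c₂`. -/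
def typeII : Fin 3 → Matrix (Fin 3) (Fin 3) R :=
  ![!![0, 1, 0; 1, 0, 0; 0, 0, 0], !![1, 0, 0; 0, 0, 0; 0, 0, 0], !![0, 0, 0; 0, 0, 0; 0, 0, 1]]

theorem sum_mul_typeII (v : Fin 3 → R) (q s : Fin 3) :
    ∑ p, v p * typeII p q s = !![v 1, v 0, 0; v 0, 0, 0; 0, 0, v 2] q s := by
  fin_cases q <;> fin_cases s <;> simp [typeII, Fin.sum_univ_three]

theorem repr_typeII {A B C : Type*} [AddCommMonoid A] [Module R A] [AddCommMonoid B]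
    [Module R B] [AddCommMonoid C] [Module R C] (a : Module.Basis (Fin 3) R A)
    (b : Module.Basis (Fin 3) R B) (c : Module.Basis (Fin 3) R C) (p q s : Fin 3) :
    (a.tensorProduct (b.tensorProduct c)).repr
      (a 0 ⊗ₜ (b 0 ⊗ₜ c 1 + b 1 ⊗ₜ c 0) + a 1 ⊗ₜ (b 0 ⊗ₜ c 0) + a 2 ⊗ₜ (b 2 ⊗ₜ c 2)) (p, q, s) =
      typeII p q s := by
  simp only [TensorProduct.tmul_add, map_add, Finsupp.add_apply,
    Module.Basis.tensorProduct_repr_tmul_apply, Module.Basis.repr_self, smul_eq_mul]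
  fin_cases p <;> fin_cases q <;> fin_cases s <;> simp [typeII]

theorem not_forall_sum_mul_eq_typeII {R : Type*} [CommRing R] [IsDomain R]
    (X Y Z : Matrix (Fin 3) (Fin 3) R) :
    ¬ ∀ p q s, ∑ i, X p i * (Y q i * Z s i) = typeII p q s := by
  intro hT
  have hdet : X.det ≠ 0 := by
    intro h0
    obtain ⟨v, hv0, hv⟩ := Matrix.exists_vecMul_eq_zero_iff.mpr h0
    have slice (q s : Fin 3) : !![v 1, v 0, 0; v 0, 0, 0; 0, 0, v 2] q s = 0 := by
      rw [← sum_mul_typeII, sum_mul_eq_sum_vecMul_mul hT, hv]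
      simp
    apply hv0
    ext j
    fin_cases j
    exacts [slice 0 1, slice 0 0, slice 2 2]
  have hcol (i : Fin 3) : X.adjugate i 0 = 0 := by
    have slice (q s : Fin 3) :
        X.det * (Y q i * Z s i) = !![X.adjugate i 1, X.adjugate i 0, 0; X.adjugate i 0, 0, 0;
          0, 0, X.adjugate i 2] q s := by
      rw [← sum_adjugate_mul_eq_det_mul hT, sum_mul_typeII]
    have h00 := slice 0 0
    have h01 := slice 0 1
    have h10 := slice 1 0
    have h11 := slice 1 1
    simp only [Matrix.of_apply, Matrix.cons_val', Matrix.cons_val_zero, Matrix.cons_val_one,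
      Matrix.empty_val', Matrix.cons_val_fin_one] at h00 h01 h10 h11
    -- the slice is `det • yᵢ zᵢᵀ`, so its leading 2 × 2 minor `-(adj i 0)²` vanishes
    apply pow_eq_zero_iff two_ne_zero |>.mp
    linear_combination (-(X.adjugate i 0)) * h01 - (X.det * Y 0 i * Z 1 i) * h10
      + (X.det * Y 1 i * Z 1 i) * h00 + X.adjugate i 1 * h11
  apply hdet
  simpa [Matrix.mul_apply, hcol] using (congrFun₂ (Matrix.mul_adjugate X) 0 0).symm

end TypeII

/-- The tensor `a₁⊗(b₁⊗c₂ + b₂⊗c₁) + a₂⊗b₁⊗c₁ + a₃⊗b₃⊗c₃`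
(with `{aᵢ}, {bᵢ}, {cᵢ}` bases of 3-dimensional spaces) has tensor rank exactly 4. -/
theorem rank_type_ii_tensor_eq_four {A B C : Type*}
    [AddCommGroup A] [Module ℂ A] [AddCommGroup B] [Module ℂ B] [AddCommGroup C] [Module ℂ C]
    (a : Module.Basis (Fin 3) ℂ A) (b : Module.Basis (Fin 3) ℂ B) (c : Module.Basis (Fin 3) ℂ C) :
    IsLeast {r : ℕ | ∃ (x : Fin r → A) (y : Fin r → B) (z : Fin r → C),
        (a 0 ⊗ₜ[ℂ] (b 0 ⊗ₜ[ℂ] c 1 + b 1 ⊗ₜ[ℂ] c 0) + a 1 ⊗ₜ[ℂ] (b 0 ⊗ₜ[ℂ] c 0)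
          + a 2 ⊗ₜ[ℂ] (b 2 ⊗ₜ[ℂ] c 2)
          : A ⊗[ℂ] (B ⊗[ℂ] C))
          = ∑ i, x i ⊗ₜ[ℂ] (y i ⊗ₜ[ℂ] z i)} 4 := by
  refine ⟨⟨![a 0, a 0, a 1, a 2], ![b 0, b 1, b 0, b 2], ![c 1, c 0, c 0, c 2], by
    simp [Fin.sum_univ_four, TensorProduct.tmul_add]⟩, fun r hr => ?_⟩
  by_contra! hr4
  obtain ⟨x, y, z, hxyz⟩ := HasRankDecomposition.mono hr (by omega : r ≤ 3)
  apply not_forall_sum_mul_eq_typeII (Matrix.of fun p i => a.repr (x i) p)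
    (Matrix.of fun q i => b.repr (y i) q) (Matrix.of fun s i => c.repr (z i) s)
  intro p q s
  rw [← repr_typeII a b c, hxyz, Module.Basis.tensorProduct_repr_sum_tmul_tmul]
  rfl
end
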